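/- Let Π : ℝ^{n_x} ⇉ ℝ^{n_o} be a set-valued mapping that is Lipschitz continuous on ℝ^{n_x} with constant L ≥ 0 (in particular, Π(x) is nonempty and closed for every x ∈ ℝ^{n_x}), and let A₀ ⊆ ℝ^{n_x} × ℝ^{n_c} be a nonempty set. Equip the product space ℝ^{n_x} × ℝ^{n_c} × ℝ^{n_x} × ℝ^{n_o} with the Euclidean (ℓ²) norm ‖(a,b,c,d)‖² = ‖a‖² + ‖b‖² + ‖c‖² + ‖d‖², and define A := { (x, x_c, x_s, x_o) : x_s = x, (x, x_c) ∈ A₀, x_o ∈ Π(x) }. Then for every θ_x ∈ ℝ^{n_x}, θ_c ∈ ℝ^{n_c}, and θ_o ∈ Π(θ_x), the distance from the point θ = (θ_x, θ_c, θ_x, θ_o) to A satisfies dist(θ, A) ≤ √(2 + L²) · dist((θ_x, θ_c), A₀). -/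
import Mathlib
set_option maxHeartbeats 1000000


open Metric

/-- **Lemma 4 (core inequality).**
Let `Π : ℝ^{n_x} ⇉ ℝ^{n_o}` be Lipschitz continuous on `ℝ^{n_x}` with constant
`L ≥ 0` (so `Π(x)` is nonempty and closed for every `x`, and
`sup_z |dist(z,Π(x₁)) − dist(z,Π(x₂))| ≤ L‖x₁ − x₂‖`, stated here pointwise in `z`),
and let `A₀ ⊆ ℝ^{n_x} × ℝ^{n_c}` be nonempty.  Equip the product space
`ℝ^{n_x} × ℝ^{n_c} × ℝ^{n_x} × ℝ^{n_o}` with the ℓ² norm (via nested `WithLp 2`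
products) and define
`A := { (x, x_c, x_s, x_o) : x_s = x, (x, x_c) ∈ A₀, x_o ∈ Π(x) }`.
Then for every `θ_x`, `θ_c` and every `θ_o ∈ Π(θ_x)`, the point
`θ = (θ_x, θ_c, θ_x, θ_o)` satisfies
`dist(θ, A) ≤ √(2 + L²) · dist((θ_x, θ_c), A₀)`. -/
theorem dist_to_target_set_le {nx nc no : ℕ}
    (Pi : EuclideanSpace ℝ (Fin nx) → Set (EuclideanSpace ℝ (Fin no)))
    (L : ℝ) (hL : 0 ≤ L)
    (hne : ∀ x, (Pi x).Nonempty)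
    (hcl : ∀ x, IsClosed (Pi x))
    (hlip : ∀ x₁ x₂ : EuclideanSpace ℝ (Fin nx), ∀ z : EuclideanSpace ℝ (Fin no),
      |infDist z (Pi x₁) - infDist z (Pi x₂)| ≤ L * ‖x₁ - x₂‖)
    (A₀ : Set (WithLp 2 (EuclideanSpace ℝ (Fin nx) × EuclideanSpace ℝ (Fin nc))))
    (hA₀ : A₀.Nonempty)
    (A : Set (WithLp 2
      (WithLp 2 (EuclideanSpace ℝ (Fin nx) × EuclideanSpace ℝ (Fin nc)) ×
       WithLp 2 (EuclideanSpace ℝ (Fin nx) × EuclideanSpace ℝ (Fin no)))))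
    (hA : A = { ξ | ∃ x xc xo,
      ξ = (WithLp.equiv 2 _).symm
            ((WithLp.equiv 2 _).symm (x, xc), (WithLp.equiv 2 _).symm (x, xo)) ∧
      (WithLp.equiv 2 _).symm (x, xc) ∈ A₀ ∧ xo ∈ Pi x }) :
    ∀ (θx : EuclideanSpace ℝ (Fin nx)) (θc : EuclideanSpace ℝ (Fin nc))
      (θo : EuclideanSpace ℝ (Fin no)), θo ∈ Pi θx →
      infDist ((WithLp.equiv 2 _).symm
          ((WithLp.equiv 2 _).symm (θx, θc), (WithLp.equiv 2 _).symm (θx, θo))) A ≤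
        Real.sqrt (2 + L ^ 2) * infDist ((WithLp.equiv 2 _).symm (θx, θc)) A₀ := by
  intro θx θc θo hθo
  set C : ℝ := Real.sqrt (2 + L ^ 2) with hC
  have hC1 : 1 ≤ C := by
    rw [hC]
    nlinarith [Real.sq_sqrt (by positivity : (0:ℝ) ≤ 2 + L ^ 2),
      Real.sqrt_nonneg (2 + L ^ 2)]
  have hCpos : 0 < C + 1 := by linarith
  set p₀ := (WithLp.equiv 2 _).symm (θx, θc) with hp₀
  set D := infDist p₀ A₀ with hD
  have hDnn : 0 ≤ D := infDist_nonneg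
  refine le_of_forall_pos_le_add ?_
  intro ε' hε'
  set ε : ℝ := ε' / (C + 1) with hε
  have hεpos : 0 < ε := div_pos hε' hCpos
  -- choose a point of A₀ close to p₀
  obtain ⟨p, hpA₀, hpd⟩ := (infDist_lt_iff hA₀).mp (by linarith : D < D + ε)
  set x := p.fst with hx
  set xc := p.snd with hxc
  -- dist from θo to Pi x is at most L * ‖θx - x‖
  have hθo0 : infDist θo (Pi θx) = 0 := infDist_zero_of_mem hθo
  have hinf : infDist θo (Pi x) ≤ L * ‖θx - x‖ := by
    have := hlip θx x θo
    rw [hθo0] at this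
    have := abs_le.mp this
    linarith [this.1]
  set δ := dist p₀ p with hδ
  have hδnn : 0 ≤ δ := dist_nonneg
  have hxle : dist θx x ≤ δ := by
    have := WithLp.prod_dist_eq_of_L2 p₀ p
    have h1 : dist p₀.fst p.fst ≤ δ := by
      have h2 := Real.sqrt_le_sqrt (show dist p₀.fst p.fst ^ 2 ≤
        dist p₀.fst p.fst ^ 2 + dist p₀.snd p.snd ^ 2 by nlinarith [sq_nonneg (dist p₀.snd p.snd)])
      rw [Real.sqrt_sq dist_nonneg] at h2
      rw [hδ, this]
      exact h2
    exact h1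
  have hnorm : ‖θx - x‖ = dist θx x := by rw [dist_eq_norm]
  -- choose xo ∈ Pi x close to θo
  have hlt : infDist θo (Pi x) < L * δ + ε := by
    calc infDist θo (Pi x) ≤ L * ‖θx - x‖ := hinf
      _ ≤ L * δ := by rw [hnorm]; exact mul_le_mul_of_nonneg_left hxle hL
      _ < L * δ + ε := by linarith
  obtain ⟨xo, hxoPi, hxod⟩ := (infDist_lt_iff (hne x)).mp hlt
  -- the candidate point in A
  set ξ := (WithLp.equiv 2 _).symm
      ((WithLp.equiv 2 _).symm (x, xc), (WithLp.equiv 2 _).symm (x, xo)) with hξ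
  have hpeq : p = (WithLp.equiv 2 _).symm (x, xc) := rfl
  have hξA : ξ ∈ A := by
    rw [hA]
    exact ⟨x, xc, xo, rfl, hpeq ▸ hpA₀, hxoPi⟩
  set θ := (WithLp.equiv 2 _).symm
      ((WithLp.equiv 2 _).symm (θx, θc), (WithLp.equiv 2 _).symm (θx, θo)) with hθ
  have hstep : infDist θ A ≤ dist θ ξ := infDist_le_dist_of_mem hξA
  -- compute dist θ ξ
  have hd2 : dist ((WithLp.equiv 2 _).symm (θx, θo) :
      WithLp 2 (EuclideanSpace ℝ (Fin nx) × EuclideanSpace ℝ (Fin no)))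
      ((WithLp.equiv 2 _).symm (x, xo)) =
      Real.sqrt (dist θx x ^ 2 + dist θo xo ^ 2) := by
    rw [WithLp.prod_dist_eq_of_L2]
    rfl
  have hd1 : dist θ ξ = Real.sqrt (δ ^ 2 + (dist θx x ^ 2 + dist θo xo ^ 2)) := by
    rw [hθ, hξ, WithLp.prod_dist_eq_of_L2]
    have hfst : dist
        ((WithLp.equiv 2 _).symm ((WithLp.equiv 2 _).symm (θx, θc),
          (WithLp.equiv 2 _).symm (θx, θo))).fst
        ((WithLp.equiv 2 _).symm ((WithLp.equiv 2 _).symm (x, xc),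
          (WithLp.equiv 2 _).symm (x, xo))).fst = δ := by
      rw [hδ, hp₀, hpeq]; rfl
    rw [hfst]
    congr 1
    have : dist
        ((WithLp.equiv 2 _).symm ((WithLp.equiv 2 _).symm (θx, θc),
          (WithLp.equiv 2 _).symm (θx, θo))).snd
        ((WithLp.equiv 2 _).symm ((WithLp.equiv 2 _).symm (x, xc),
          (WithLp.equiv 2 _).symm (x, xo))).snd =
        Real.sqrt (dist θx x ^ 2 + dist θo xo ^ 2) := hd2
    rw [this, Real.sq_sqrt (by positivity)]
  -- main estimate
  have hdo : dist θo xo ≤ L * δ + ε := le_of_lt hxod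
  have hkey : dist θ ξ ≤ C * δ + ε := by
    rw [hd1]
    have h1 : δ ^ 2 + (dist θx x ^ 2 + dist θo xo ^ 2) ≤ (C * δ + ε) ^ 2 := by
      have hCδ : C ^ 2 = 2 + L ^ 2 := Real.sq_sqrt (by positivity)
      have hLδ : L * δ ≤ C * δ := by
        have : L ≤ C := by nlinarith [Real.sqrt_nonneg (2 + L ^ 2)]
        exact mul_le_mul_of_nonneg_right this hδnn
      nlinarith [dist_nonneg (x := θo) (y := xo), dist_nonneg (x := θx) (y := x),
        sq_nonneg δ, hxle, hdo, hδnn, hεpos.le]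
    calc Real.sqrt (δ ^ 2 + (dist θx x ^ 2 + dist θo xo ^ 2))
        ≤ Real.sqrt ((C * δ + ε) ^ 2) := Real.sqrt_le_sqrt h1
      _ = C * δ + ε := Real.sqrt_sq (by positivity)
  have hfinal : infDist θ A ≤ C * (D + ε) + ε := by
    calc infDist θ A ≤ dist θ ξ := hstep
      _ ≤ C * δ + ε := hkey
      _ ≤ C * (D + ε) + ε := by
          have : δ ≤ D + ε := le_of_lt hpd
          nlinarith
  calc infDist θ A ≤ C * (D + ε) + ε := hfinal
    _ = C * D + (C + 1) * ε := by ring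
    _ = C * D + ε' := by rw [hε]; field_simp
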